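/- arXiv:1502.06823 — 4 statements merged into one kernel-verified Lean document; each statement's English description precedes it below -/
import Mathlib

section
/- Let S be a positive integer and p_1,...,p_S be real numbers in (0,1). Define K(n) = (Σ_{i=1}^S (1-p_i)^n) / (Σ_{i=1}^S p_i(1-p_i)^{n-1}). Then K is monotonically increasing: for all positive integers n and m, K(n+m) ≥ K(n). -/
lemma key_ineq (S : ℕ) (q : Fin S → ℝ) (hq : ∀ i, 0 ≤ q i) (k : ℕ) :
    (∑ i, q i ^ (k+1)) * (∑ j, (1 - q j) * q j ^ (k+1)) ≤
    (∑ i, q i ^ (k+2)) * (∑ j, (1 - q j) * q j ^ k) := by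
  set g : Fin S → Fin S → ℝ :=
    fun i j => (1 - q j) * (q i ^ (k+1) * q j ^ k * (q i - q j)) with hg
  have expand : (∑ i, q i ^ (k+2)) * (∑ j, (1 - q j) * q j ^ k)
      - (∑ i, q i ^ (k+1)) * (∑ j, (1 - q j) * q j ^ (k+1))
      = ∑ i, ∑ j, g i j := by
    rw [Finset.sum_mul_sum, Finset.sum_mul_sum, ← Finset.sum_sub_distrib]
    refine Finset.sum_congr rfl fun i _ => ?_
    rw [← Finset.sum_sub_distrib]
    refine Finset.sum_congr rfl fun j _ => ?_
    simp only [hg]; ring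
  have hsym : ∀ i j, 0 ≤ g i j + g j i := by
    intro i j
    have : g i j + g j i = q i ^ k * q j ^ k * (q i - q j) ^ 2 := by
      simp only [hg]; ring
    rw [this]
    exact mul_nonneg (mul_nonneg (pow_nonneg (hq i) k) (pow_nonneg (hq j) k)) (sq_nonneg _)
  have h2 : 0 ≤ ∑ i, ∑ j, g i j := by
    have hdouble : (∑ i, ∑ j, g i j) + (∑ i, ∑ j, g i j)
        = ∑ i, ∑ j, (g i j + g j i) := by
      nth_rewrite 2 [Finset.sum_comm]
      rw [← Finset.sum_add_distrib]
      exact Finset.sum_congr rfl fun i _ => (Finset.sum_add_distrib).symm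
    have hnn : 0 ≤ ∑ i, ∑ j, (g i j + g j i) :=
      Finset.sum_nonneg fun i _ => Finset.sum_nonneg fun j _ => hsym i j
    linarith [hdouble, hnn]
  linarith [expand, h2]

theorem K_monotone (S : ℕ) (hS : 0 < S) (p : Fin S → ℝ)
    (hp : ∀ i, p i ∈ Set.Ioo (0 : ℝ) 1)
    (K : ℕ → ℝ)
    (hK : ∀ n : ℕ, K n = (∑ i, (1 - p i) ^ n) / (∑ i, p i * (1 - p i) ^ (n - 1)))
    (n m : ℕ) (hn : 0 < n) (hm : 0 < m) :
    K (n + m) ≥ K n := by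
  have hq : ∀ i, 0 < 1 - p i := fun i => by have := (hp i).2; linarith
  have hq0 : ∀ i, (0:ℝ) ≤ 1 - p i := fun i => (hq i).le
  have hB : ∀ N : ℕ, 0 < ∑ i, p i * (1 - p i) ^ N := by
    intro N
    apply Finset.sum_pos
    · intro i _
      exact mul_pos (hp i).1 (pow_pos (hq i) N)
    · exact Finset.univ_nonempty_iff.mpr (Fin.pos_iff_nonempty.mp hS)
  -- step
  have step : ∀ N : ℕ, 0 < N → K N ≤ K (N + 1) := by
    intro N hN
    obtain ⟨k, rfl⟩ : ∃ k, N = k + 1 := ⟨N - 1, (Nat.succ_pred_eq_of_pos hN).symm⟩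
    rw [hK, hK]
    have e1 : k + 1 - 1 = k := rfl
    have e2 : k + 1 + 1 - 1 = k + 1 := rfl
    rw [e1, e2]
    rw [div_le_div_iff₀ (hB k) (hB (k+1))]
    have := key_ineq S (fun i => 1 - p i) hq0 k
    calc (∑ i, (1 - p i) ^ (k+1)) * (∑ i, p i * (1 - p i) ^ (k+1))
        = (∑ i, (1 - p i) ^ (k+1)) * (∑ j, (1 - (1 - p j)) * (1 - p j) ^ (k+1)) := by
          congr 1; exact Finset.sum_congr rfl fun j _ => by ring
      _ ≤ (∑ i, (1 - p i) ^ (k+2)) * (∑ j, (1 - (1 - p j)) * (1 - p j) ^ k) := this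
      _ = (∑ i, (1 - p i) ^ (k+1+1)) * (∑ i, p i * (1 - p i) ^ k) := by
          congr 1; exact Finset.sum_congr rfl fun j _ => by ring
  -- induction on m
  induction m with
  | zero => exact absurd hm (lt_irrefl 0)
  | succ m ih =>
    rcases Nat.eq_zero_or_pos m with h0 | hmpos
    · subst h0; exact step n hn
    · have h1 := ih hmpos
      have h2 := step (n + m) (by omega)
      have : n + (m + 1) = (n + m) + 1 := by omega
      rw [this]
      exact le_trans h1 h2
end

section
/- Let S be a positive integer, n, m positive integers, and p_1,...,p_S ∈ (0,1). Then (Σ_{i=1}^S (1-p_i)^{n+m})·(Σ_{j=1}^S p_j(1-p_j)^{n-1}) ≥ (Σ_{i=1}^S p_i(1-p_i)^{n+m-1})·(Σ_{j=1}^S (1-p_j)^n). -/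
/-!
Write `q i = 1 - p i` and use the weights `w i = q i ^ (n - 1)`. Since `p i = 1 - q i`, both sides
expand into the sums `W = ∑ w`, `A = ∑ w q`, `B = ∑ w q ^ m` and `C = ∑ w q ^ m q`, and the
inequality `C (W - A) ≥ (B - C) A` reduces to `B A ≤ W C`. This is the weighted Chebyshev sum
inequality, because `q ^ m` and `q` are similarly ordered.
-/

open Finset

theorem MonovaryOn.sum_mul_sum_le_sum_mul_sum {ι R : Type*} [CommRing R] [LinearOrder R]
    [IsStrictOrderedRing R] {s : Finset ι} {w f g : ι → R} (hw : ∀ i ∈ s, 0 ≤ w i)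
    (hfg : MonovaryOn f g s) :
    (∑ i ∈ s, w i * f i) * ∑ i ∈ s, w i * g i ≤ (∑ i ∈ s, w i) * ∑ i ∈ s, w i * f i * g i := by
  have hpairs : 0 ≤ ∑ i ∈ s, ∑ j ∈ s, w i * w j * ((f j - f i) * (g j - g i)) :=
    sum_nonneg fun i hi ↦ sum_nonneg fun j hj ↦
      mul_nonneg (mul_nonneg (hw i hi) (hw j hj)) (hfg.sub_mul_sub_nonneg hi hj)
  have hexpand : ∑ i ∈ s, ∑ j ∈ s, w i * w j * ((f j - f i) * (g j - g i)) =
      2 * ((∑ i ∈ s, w i) * ∑ i ∈ s, w i * f i * g i -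
        (∑ i ∈ s, w i * f i) * ∑ i ∈ s, w i * g i) := by
    calc _ = ∑ i ∈ s, ∑ j ∈ s, (w i * (w j * f j * g j) + w j * (w i * f i * g i)
          - (w i * f i) * (w j * g j) - (w j * f j) * (w i * g i)) :=
          sum_congr rfl fun i _ ↦ sum_congr rfl fun j _ ↦ by ring
      _ = _ := by
          simp only [sum_add_distrib, sum_sub_distrib, ← mul_sum, ← sum_mul]
          ring
  nlinarith

theorem cross_mul_monotone_general (S : ℕ) (n m : ℕ) (hn : 0 < n)
    (p : Fin S → ℝ) (hp : ∀ i, p i ∈ Set.Ioo (0 : ℝ) 1) :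
    (∑ i, (1 - p i) ^ (n + m)) * (∑ j, p j * (1 - p j) ^ (n - 1)) ≥
      (∑ i, p i * (1 - p i) ^ (n + m - 1)) * (∑ j, (1 - p j) ^ n) := by
  obtain ⟨q, rfl⟩ : ∃ q : Fin S → ℝ, p = fun i ↦ 1 - q i := ⟨fun i ↦ 1 - p i, by simp⟩
  beta_reduce at hp ⊢
  have hq : ∀ i, 0 ≤ q i := fun i ↦ by linarith [(hp i).2]
  have hmono : Monovary (fun i ↦ q i ^ m) q := fun i j hij ↦ pow_le_pow_left₀ (hq i) hij.le m
  have hcheb := MonovaryOn.sum_mul_sum_le_sum_mul_sum (s := univ) (w := fun i ↦ q i ^ (n - 1))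
    (fun i _ ↦ pow_nonneg (hq i) _) (hmono.monovaryOn _)
  have hpow_n : ∀ i, q i ^ n = q i ^ (n - 1) * q i := fun i ↦ (pow_sub_one_mul hn.ne' _).symm
  have hpow_nm : ∀ i, q i ^ (n + m) = q i ^ (n - 1) * q i ^ m * q i := fun i ↦ by
    rw [← pow_add, ← pow_succ]
    congr 1
    omega
  have hterm_n : ∀ i, (1 - q i) * q i ^ (n - 1) = q i ^ (n - 1) - q i ^ (n - 1) * q i :=
    fun i ↦ by ring
  have hterm_nm : ∀ i, (1 - q i) * q i ^ (n + m - 1) =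
      q i ^ (n - 1) * q i ^ m - q i ^ (n - 1) * q i ^ m * q i := fun i ↦ by
    rw [← pow_add, Nat.sub_add_comm hn]
    ring
  simp only [sub_sub_cancel, hpow_n, hpow_nm, hterm_n, hterm_nm, sum_sub_distrib]
  linear_combination hcheb

theorem cross_mul_monotone (S : ℕ) (hS : 0 < S) (n m : ℕ) (hn : 0 < n) (hm : 0 < m)
    (p : Fin S → ℝ) (hp : ∀ i, p i ∈ Set.Ioo (0 : ℝ) 1) :
    (∑ i, (1 - p i) ^ (n + m)) * (∑ j, p j * (1 - p j) ^ (n - 1)) ≥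
      (∑ i, p i * (1 - p i) ^ (n + m - 1)) * (∑ j, (1 - p j) ^ n) :=
  cross_mul_monotone_general S n m hn p hp
end

section
/- Let S be a positive integer, n a positive integer, and p_1,...,p_S ∈ (0,1). Then K(n) = (Σ_{i=1}^S (1-p_i)^n)/(Σ_{i=1}^S p_i(1-p_i)^{n-1}) satisfies K(n) ≥ ((n-1)·F_1)/(2·F_2), where F_1 = Σ_{i=1}^S n·p_i·(1-p_i)^{n-1} and F_2 = Σ_{i=1}^S C(n,2)·p_i^2·(1-p_i)^{n-2}, provided n ≥ 2 and F_2 > 0. -/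
theorem K_lower_bound (S : ℕ) (hS : 0 < S) (n : ℕ) (hn : 2 ≤ n)
    (p : Fin S → ℝ) (hp : ∀ i, p i ∈ Set.Ioo (0 : ℝ) 1)
    (F₁ F₂ : ℝ)
    (hF₁ : F₁ = ∑ i, (n : ℝ) * p i * (1 - p i) ^ (n - 1))
    (hF₂ : F₂ = ∑ i, (Nat.choose n 2 : ℝ) * p i ^ 2 * (1 - p i) ^ (n - 2))
    (hF₂pos : 0 < F₂) :
    (∑ i, (1 - p i) ^ n) / (∑ i, p i * (1 - p i) ^ (n - 1)) ≥
      ((n : ℝ) - 1) * F₁ / (2 * F₂) := by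
  obtain ⟨m, rfl⟩ : ∃ m, n = m + 2 := ⟨n - 2, by omega⟩
  have hne : (Finset.univ : Finset (Fin S)).Nonempty := by
    simpa [Finset.univ_nonempty_iff, Fin.pos_iff_nonempty.mp hS] using
      Finset.univ_nonempty (α := Fin S)
  set A : ℝ := ∑ i, (1 - p i) ^ (m + 2) with hA
  set B : ℝ := ∑ i, p i * (1 - p i) ^ (m + 2 - 1) with hB
  set C : ℝ := ∑ i, p i ^ 2 * (1 - p i) ^ m with hC
  have hpos : ∀ i : Fin S, 0 < p i ∧ p i < 1 := fun i => ⟨(hp i).1, (hp i).2⟩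
  have hq : ∀ i : Fin S, 0 < 1 - p i := fun i => by have := (hpos i).2; linarith
  have hBpos : 0 < B := Finset.sum_pos (fun i _ => by
    have h1 := (hpos i).1; have h2 := hq i
    positivity) hne
  have hCpos : 0 < C := Finset.sum_pos (fun i _ => by
    have h1 := (hpos i).1; have h2 := hq i
    positivity) hne
  have hCS : B ^ 2 ≤ A * C := by
    refine Finset.sum_sq_le_sum_mul_sum_of_sq_eq_mul _ (f := fun i => (1 - p i) ^ (m + 2))
      (g := fun i => p i ^ 2 * (1 - p i) ^ m)
      (fun i _ => by have h2 := hq i; positivity)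
      (fun i _ => by have h1 := (hpos i).1; have h2 := hq i; positivity)
      (fun i _ => ?_)
    show (p i * (1 - p i) ^ (m + 2 - 1)) ^ 2 = (1 - p i) ^ (m + 2) * (p i ^ 2 * (1 - p i) ^ m)
    have : m + 2 - 1 = m + 1 := rfl
    rw [this]
    ring
  have hF₂' : F₂ = ((m + 2) * (m + 1) / 2 : ℝ) * C := by
    rw [hF₂, Finset.mul_sum]
    refine Finset.sum_congr rfl fun i _ => ?_
    rw [Nat.cast_choose_two]
    push_cast
    ring_nf
  have hF₁' : F₁ = ((m : ℝ) + 2) * B := by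
    rw [hF₁, Finset.mul_sum]
    push_cast
    refine Finset.sum_congr rfl fun i _ => ?_
    ring
  have hrhs : ((m + 2 : ℕ) : ℝ) - 1 = (m : ℝ) + 1 := by push_cast; ring
  rw [ge_iff_le, hF₁', hF₂', hrhs]
  have key : ((m : ℝ) + 1) * (((m : ℝ) + 2) * B) / (2 * (((m : ℝ) + 2) * ((m : ℝ) + 1) / 2 * C))
      = B / C := by
    rw [div_eq_div_iff (by positivity) hCpos.ne']
    ring
  rw [key, div_le_div_iff₀ hCpos hBpos]
  nlinarith [hCS]
end

section
/- Let S be a positive integer, n ≥ 3 an integer, and p_1,...,p_S ∈ (0,1). Define g(i) = ((n-i)·F_i)/((i+1)·F_{i+1}) for 1 ≤ i ≤ n-1, where F_j = Σ_{i=1}^S C(n,j)·p_i^j·(1-p_i)^{n-j}. Then g(1) ≥ g(2), i.e., ((n-1)F_1)/(2F_2) ≥ ((n-2)F_2)/(3F_3), provided F_2, F_3 > 0. -/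
lemma ch2 (m : ℕ) : (m+3).choose 2 * 2 = (m+3)*(m+2) := by
  induction m with
  | zero => decide
  | succ k ih =>
    have : (k+4).choose 2 = (k+3).choose 1 + (k+3).choose 2 := Nat.choose_succ_succ _ _
    rw [show k+1+3 = k+4 by ring, this, Nat.add_mul, ih, Nat.choose_one_right]; ring

lemma ch3 (m : ℕ) : (m+3).choose 3 * 6 = (m+3)*(m+2)*(m+1) := by
  induction m with
  | zero => decide
  | succ k ih =>
    have : (k+4).choose 3 = (k+3).choose 2 + (k+3).choose 3 := Nat.choose_succ_succ _ _
    rw [show k+1+3 = k+4 by ring, this, Nat.add_mul, ih]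
    have h2 := ch2 k
    nlinarith [h2]

theorem chain_step (S : ℕ) (hS : 0 < S) (n : ℕ) (hn : 3 ≤ n)
    (p : Fin S → ℝ) (hp : ∀ i, p i ∈ Set.Ioo (0 : ℝ) 1)
    (F₁ F₂ F₃ : ℝ)
    (hF₁ : F₁ = ∑ i, (Nat.choose n 1 : ℝ) * p i ^ 1 * (1 - p i) ^ (n - 1))
    (hF₂ : F₂ = ∑ i, (Nat.choose n 2 : ℝ) * p i ^ 2 * (1 - p i) ^ (n - 2))
    (hF₃ : F₃ = ∑ i, (Nat.choose n 3 : ℝ) * p i ^ 3 * (1 - p i) ^ (n - 3))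
    (hF₂pos : 0 < F₂) (hF₃pos : 0 < F₃) :
    ((n : ℝ) - 1) * F₁ / (2 * F₂) ≥ ((n : ℝ) - 2) * F₂ / (3 * F₃) := by
  obtain ⟨m, rfl⟩ : ∃ m, n = m + 3 := ⟨n - 3, by omega⟩
  set A : ℝ := ∑ i, p i * (1 - p i) ^ (m+2) with hA
  set B : ℝ := ∑ i, p i ^ 2 * (1 - p i) ^ (m+1) with hB
  set C : ℝ := ∑ i, p i ^ 3 * (1 - p i) ^ m with hC
  have hqnn : ∀ i, (0:ℝ) ≤ 1 - p i := fun i => by have := (hp i).2; linarith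
  have hpnn : ∀ i, (0:ℝ) ≤ p i := fun i => (hp i).1.le
  -- Cauchy-Schwarz: B^2 ≤ A * C
  have key : B ^ 2 ≤ A * C := by
    have cs := Finset.sum_mul_sq_le_sq_mul_sq Finset.univ
      (fun i => Real.sqrt (p i * (1 - p i) ^ (m+2)))
      (fun i => Real.sqrt (p i ^ 3 * (1 - p i) ^ m))
    have e1 : ∀ i : Fin S, Real.sqrt (p i * (1 - p i) ^ (m+2)) *
        Real.sqrt (p i ^ 3 * (1 - p i) ^ m) = p i ^ 2 * (1 - p i) ^ (m+1) := by
      intro i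
      have h1 := hpnn i; have h2 := hqnn i
      rw [← Real.sqrt_mul (by positivity)]
      rw [show p i * (1 - p i) ^ (m+2) * (p i ^ 3 * (1 - p i) ^ m)
          = (p i ^ 2 * (1 - p i) ^ (m+1)) ^ 2 by ring]
      exact Real.sqrt_sq (by positivity)
    have e2 : ∀ i : Fin S, Real.sqrt (p i * (1 - p i) ^ (m+2)) ^ 2
        = p i * (1 - p i) ^ (m+2) := by
      intro i; have h1 := hpnn i; have h2 := hqnn i
      exact Real.sq_sqrt (by positivity)
    have e3 : ∀ i : Fin S, Real.sqrt (p i ^ 3 * (1 - p i) ^ m) ^ 2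
        = p i ^ 3 * (1 - p i) ^ m := by
      intro i; have h1 := hpnn i; have h2 := hqnn i
      exact Real.sq_sqrt (by positivity)
    simp only [e1, e2, e3] at cs
    exact cs
  -- rewrite F's
  have c2 : ((m+3).choose 2 : ℝ) = ((m:ℝ)+3)*((m:ℝ)+2)/2 := by
    have := ch2 m; field_simp; exact_mod_cast this
  have c3 : ((m+3).choose 3 : ℝ) = ((m:ℝ)+3)*((m:ℝ)+2)*((m:ℝ)+1)/6 := by
    have := ch3 m; field_simp; exact_mod_cast this
  have hF₁' : F₁ = ((m:ℝ)+3) * A := by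
    rw [hF₁, Finset.mul_sum]
    refine Finset.sum_congr rfl fun i _ => ?_
    rw [show m + 3 - 1 = m + 2 from rfl, Nat.choose_one_right]
    push_cast
    ring
  have hF₂' : F₂ = (((m:ℝ)+3)*((m:ℝ)+2)/2) * B := by
    rw [hF₂, Finset.mul_sum]
    refine Finset.sum_congr rfl fun i _ => ?_
    rw [show m + 3 - 2 = m + 1 from rfl, c2]; ring
  have hF₃' : F₃ = (((m:ℝ)+3)*((m:ℝ)+2)*((m:ℝ)+1)/6) * C := by
    rw [hF₃, Finset.mul_sum]
    refine Finset.sum_congr rfl fun i _ => ?_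
    rw [show m + 3 - 3 = m from rfl, c3]; ring
  rw [ge_iff_le, div_le_div_iff₀ (by positivity) (by positivity)]
  have hAnn : 0 ≤ A := Finset.sum_nonneg fun i _ =>
    mul_nonneg (hpnn i) (pow_nonneg (hqnn i) _)
  have coef : (0:ℝ) ≤ ((m:ℝ)+1)*((m:ℝ)+2)^2*((m:ℝ)+3)^2/2 := by positivity
  push_cast
  rw [hF₁', hF₂', hF₃']
  nlinarith [key, hAnn, mul_le_mul_of_nonneg_left key coef]
end
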